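/- Let n ≥ 3 and p = (n+2)/(n−2). There exist ε_0 > 0 and C > 0 such that for every ε ∈ (0, ε_0] and all u, v ∈ ℝ: if 3 ≤ n ≤ 6 then |f_ε′(u+v) − f_ε′(u)| ≤ C (|u|^{p−2} + |v|^{p−2}) |v|, and if n > 6 then |f_ε′(u+v) − f_ε′(u)| ≤ C (|v|^{p−1} + ε|u|^{p−1}). -/

import Mathlib

open Real

/-- The critical exponent `p = (n+2)/(n-2)`. -/
noncomputable def pCrit (n : ℕ) : ℝ := ((n : ℝ) + 2) / ((n : ℝ) - 2)

/-- The non-power nonlinearity `f_ε(u) = |u|^{p-1} u / (ln(e+|u|))^ε`;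
in particular `f_0(u) = |u|^{p-1} u`. -/
noncomputable def fEps (n : ℕ) (ε u : ℝ) : ℝ :=
  |u| ^ (pCrit n - 1) * u / (Real.log (Real.exp 1 + |u|)) ^ ε

/-! ### Auxiliary definitions -/

/-- `Lg t = log (e + t)`. -/
noncomputable def Lg (t : ℝ) : ℝ := Real.log (Real.exp 1 + t)

/-- The common profile of the derivative of `fEps`: `deriv (fEps n ε) w = psi (pCrit n) ε |w|`. -/
noncomputable def psi (p ε t : ℝ) : ℝ :=
  p * (t ^ (p - 1) * Lg t ^ (-ε)) -
    ε * (t ^ (p - 1) * t * (Lg t ^ (-ε - 1) * (Real.exp 1 + t)⁻¹))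

/-- The derivative of `psi` (in `t`). -/
noncomputable def psi' (p ε t : ℝ) : ℝ :=
  p * ((p - 1) * t ^ (p - 1 - 1) * Lg t ^ (-ε) +
      t ^ (p - 1) * (-ε * Lg t ^ (-ε - 1) * (Real.exp 1 + t)⁻¹)) -
    ε * (((p - 1) * t ^ (p - 1 - 1) * t + t ^ (p - 1) * 1) *
        (Lg t ^ (-ε - 1) * (Real.exp 1 + t)⁻¹) +
      t ^ (p - 1) * t *
        ((-ε - 1) * Lg t ^ (-ε - 1 - 1) * (Real.exp 1 + t)⁻¹ * (Real.exp 1 + t)⁻¹ +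
          Lg t ^ (-ε - 1) * (-1 / (Real.exp 1 + t) ^ 2)))

/-! ### Basic facts about `Lg` -/

lemma Et_pos {t : ℝ} (ht : 0 ≤ t) : 0 < Real.exp 1 + t := by positivity

lemma one_le_Lg {t : ℝ} (ht : 0 ≤ t) : 1 ≤ Lg t := by
  have h := Real.log_le_log (Real.exp_pos 1) (by linarith : Real.exp 1 ≤ Real.exp 1 + t)
  rwa [Real.log_exp] at h

lemma Lg_pos {t : ℝ} (ht : 0 ≤ t) : 0 < Lg t := lt_of_lt_of_le one_pos (one_le_Lg ht)

lemma Lg_mono {a b : ℝ} (ha : 0 ≤ a) (hab : a ≤ b) : Lg a ≤ Lg b :=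
  Real.log_le_log (Et_pos ha) (by linarith)

lemma hasDerivAt_Lg {t : ℝ} (ht : 0 ≤ t) : HasDerivAt Lg (Real.exp 1 + t)⁻¹ t := by
  have h : HasDerivAt (fun x : ℝ => Real.exp 1 + x) 1 t := (hasDerivAt_id t).const_add _
  have h2 := (Real.hasDerivAt_log (Et_pos ht).ne').comp t h
  have h3 : HasDerivAt Lg ((Real.exp 1 + t)⁻¹ * 1) t := h2
  simpa using h3

lemma hasDerivAt_Lg_rpow (q : ℝ) {t : ℝ} (ht : 0 ≤ t) :
    HasDerivAt (fun x => Lg x ^ q) (q * Lg t ^ (q - 1) * (Real.exp 1 + t)⁻¹) t := by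
  have h := (Real.hasDerivAt_rpow_const (p := q) (Or.inl (Lg_pos ht).ne')).comp t
    (hasDerivAt_Lg ht)
  exact h

lemma Lg_rpow_le_one {t q : ℝ} (ht : 0 ≤ t) (hq : q ≤ 0) : Lg t ^ q ≤ 1 :=
  Real.rpow_le_one_of_one_le_of_nonpos (one_le_Lg ht) hq

lemma Lg_rpow_nonneg {t q : ℝ} (ht : 0 ≤ t) : 0 ≤ Lg t ^ q :=
  Real.rpow_nonneg (Lg_pos ht).le q

/-! ### Derivative of `fEps` -/

lemma psi_zero {p : ℝ} (hp : 1 < p) (ε : ℝ) : psi p ε 0 = 0 := by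
  have h1 : (0:ℝ) ^ (p - 1) = 0 := Real.zero_rpow (sub_ne_zero.mpr hp.ne')
  simp [psi, h1]

lemma hasDerivAt_fEps_pos (n : ℕ) (hp : 1 < pCrit n) (ε : ℝ) {w : ℝ} (hw : 0 < w) :
    HasDerivAt (fEps n ε) (psi (pCrit n) ε w) w := by
  set p := pCrit n with hpdef
  have hw' : w ≠ 0 := hw.ne'
  have h1 : HasDerivAt (fun x : ℝ => x ^ (p - 1)) ((p - 1) * w ^ (p - 1 - 1)) w :=
    Real.hasDerivAt_rpow_const (Or.inl hw')
  have h2 := h1.mul (hasDerivAt_id w)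
  have h3 := (hasDerivAt_Lg_rpow (-ε) hw.le)
  have h4 := h2.mul h3
  have heq : fEps n ε =ᶠ[nhds w] fun x => x ^ (p - 1) * x * Lg x ^ (-ε) := by
    filter_upwards [eventually_gt_nhds hw] with x hx
    have hx0 : (0:ℝ) ≤ Lg x := (Lg_pos hx.le).le
    rw [fEps, abs_of_pos hx, Real.rpow_neg hx0, div_eq_mul_inv]
    rfl
  have h5 := h4.congr_of_eventuallyEq heq
  simp only [id_eq, mul_one] at h5
  refine h5.congr_deriv ?_
  have hww : w ^ (p - 1 - 1) * w = w ^ (p - 1) := by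
    rw [← Real.rpow_add_one hw' (p - 1 - 1), show p - 1 - 1 + 1 = p - 1 by ring]
  simp only [psi, Pi.mul_apply, id_eq]
  rw [show (p-1) * w ^ (p-1-1) * w = (p-1) * (w ^ (p-1-1) * w) by ring, hww]
  ring

lemma fEps_zero_eq (n : ℕ) (ε : ℝ) : fEps n ε 0 = 0 := by simp [fEps]

lemma hasDerivAt_fEps_zero (n : ℕ) (hp : 1 < pCrit n) {ε : ℝ} (hε : 0 ≤ ε) :
    HasDerivAt (fEps n ε) 0 0 := by
  rw [hasDerivAt_iff_tendsto_slope]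
  apply squeeze_zero_norm (a := fun x : ℝ => |x| ^ (pCrit n - 1))
  · intro x
    rcases eq_or_ne x 0 with rfl | hx
    · rw [slope_same]
      simpa using Real.rpow_nonneg (abs_nonneg (0:ℝ)) (pCrit n - 1)
    · have hax : 0 < |x| := abs_pos.mpr hx
      have hL1 : 1 ≤ Real.log (Real.exp 1 + |x|) := one_le_Lg (abs_nonneg x)
      have hLe : 1 ≤ (Real.log (Real.exp 1 + |x|)) ^ ε :=
        Real.one_le_rpow hL1 hε
      have : slope (fEps n ε) 0 x = fEps n ε x / x := by
        simp [slope_def_field, fEps_zero_eq]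
      rw [this]
      have hLpos : (0:ℝ) < (Real.log (Real.exp 1 + |x|)) ^ ε := by
        have := Lg_pos (abs_nonneg x)
        rw [Lg] at this
        positivity
      have habs : |fEps n ε x / x| =
          |x| ^ (pCrit n - 1) / (Real.log (Real.exp 1 + |x|)) ^ ε := by
        rw [fEps, abs_div, abs_div, abs_mul,
          abs_of_nonneg (Real.rpow_nonneg (abs_nonneg x) _),
          abs_of_nonneg hLpos.le]
        rw [div_div, div_eq_div_iff (by positivity) (by positivity)]
        ring
      rw [Real.norm_eq_abs, habs]
      exact div_le_self (Real.rpow_nonneg (abs_nonneg x) _) hLe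
  · have hcont : ContinuousAt (fun x : ℝ => |x| ^ (pCrit n - 1)) 0 := by
      have h1 : ContinuousAt (fun y : ℝ => y ^ (pCrit n - 1)) (|0| : ℝ) := by
        simpa using Real.continuousAt_rpow_const 0 (pCrit n - 1) (Or.inr (by linarith))
      exact h1.comp continuous_abs.continuousAt
    have h0 : (|0| : ℝ) ^ (pCrit n - 1) = 0 := by
      simp [Real.zero_rpow (by linarith : pCrit n - 1 ≠ 0)]
    have := hcont.tendsto
    rw [h0] at this
    exact this.mono_left nhdsWithin_le_nhds

lemma fEps_odd (n : ℕ) (ε x : ℝ) : fEps n ε (-x) = - fEps n ε x := by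
  simp [fEps, abs_neg, neg_div]

lemma hasDerivAt_fEps (n : ℕ) (hp : 1 < pCrit n) {ε : ℝ} (hε : 0 ≤ ε) (w : ℝ) :
    HasDerivAt (fEps n ε) (psi (pCrit n) ε |w|) w := by
  rcases lt_trichotomy w 0 with hw | rfl | hw
  · have h := hasDerivAt_fEps_pos n hp ε (neg_pos.mpr hw)
    have h2 := (h.comp w (hasDerivAt_neg w)).neg
    have hfun : (fun x => -((fEps n ε ∘ Neg.neg) x)) = fEps n ε := by
      funext x
      simp [Function.comp, fEps_odd]
    rw [show -(fEps n ε ∘ Neg.neg) = fEps n ε from hfun] at h2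
    have : -(psi (pCrit n) ε (-w) * (-1)) = psi (pCrit n) ε |w| := by
      rw [abs_of_neg hw]; ring
    rwa [this] at h2
  · rw [abs_zero, psi_zero hp]
    exact hasDerivAt_fEps_zero n hp hε
  · rw [abs_of_pos hw]
    exact hasDerivAt_fEps_pos n hp ε hw

lemma deriv_fEps (n : ℕ) (hp : 1 < pCrit n) {ε : ℝ} (hε : 0 ≤ ε) (w : ℝ) :
    deriv (fEps n ε) w = psi (pCrit n) ε |w| :=
  (hasDerivAt_fEps n hp hε w).deriv


/-! ### Elementary inequalities -/

lemma rpow_neg_antitone {ε a b : ℝ} (hε : 0 ≤ ε) (ha : 0 < a) (hab : a ≤ b) :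
    b ^ (-ε) ≤ a ^ (-ε) := by
  have hb : 0 < b := lt_of_lt_of_le ha hab
  rw [Real.rpow_neg ha.le, Real.rpow_neg hb.le]
  have h1 : a ^ ε ≤ b ^ ε := Real.rpow_le_rpow ha.le hab hε
  have h2 : 0 < a ^ ε := Real.rpow_pos_of_pos ha ε
  exact inv_anti₀ h2 h1

lemma rpow_neg_sub_le {ε a b : ℝ} (hε : 0 ≤ ε) (ha : 1 ≤ a) (hab : a ≤ b) :
    a ^ (-ε) - b ^ (-ε) ≤ ε * (b - a) := by
  have ha0 : 0 < a := by linarith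
  have hb0 : 0 < b := by linarith
  have hb1 : 1 ≤ b := le_trans ha hab
  have hq0 : 0 < a / b := by positivity
  have h1 : b ^ (-ε) = a ^ (-ε) * (a / b) ^ ε := by
    rw [Real.div_rpow ha0.le hb0.le, Real.rpow_neg ha0.le, Real.rpow_neg hb0.le]
    have hane : a ^ ε ≠ 0 := (Real.rpow_pos_of_pos ha0 ε).ne'
    have hbne : b ^ ε ≠ 0 := (Real.rpow_pos_of_pos hb0 ε).ne'
    field_simp
  have h2 : (a / b) ^ ε ≤ 1 :=
    Real.rpow_le_one hq0.le (div_le_one_of_le₀ hab hb0.le) hε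
  have h3 : a ^ (-ε) ≤ 1 := Real.rpow_le_one_of_one_le_of_nonpos ha (by linarith)
  have h4 : a ^ (-ε) - b ^ (-ε) ≤ 1 - (a / b) ^ ε := by
    rw [h1]
    nlinarith [Real.rpow_nonneg ha0.le (-ε)]
  have h5 : 1 - (a / b) ^ ε ≤ -(ε * Real.log (a / b)) := by
    have hexp := Real.add_one_le_exp (ε * Real.log (a / b))
    have heq : Real.exp (ε * Real.log (a / b)) = (a / b) ^ ε := by
      rw [Real.rpow_def_of_pos hq0, mul_comm]
    rw [heq] at hexp
    linarith
  have h6 : -(ε * Real.log (a / b)) = ε * (Real.log b - Real.log a) := by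
    rw [Real.log_div ha0.ne' hb0.ne']; ring
  have h7 : Real.log b - Real.log a ≤ b - a := by
    have h8 : Real.log (b / a) ≤ b / a - 1 := Real.log_le_sub_one_of_pos (by positivity)
    rw [Real.log_div hb0.ne' ha0.ne'] at h8
    have h9 : b / a - 1 = (b - a) / a := by field_simp
    have h10 : (b - a) / a ≤ b - a := div_le_self (by linarith) ha
    linarith
  calc a ^ (-ε) - b ^ (-ε) ≤ 1 - (a / b) ^ ε := h4
    _ ≤ -(ε * Real.log (a / b)) := h5
    _ = ε * (Real.log b - Real.log a) := h6
    _ ≤ ε * (b - a) := mul_le_mul_of_nonneg_left h7 hε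

/-- Difference of the `Lg`-weights, monotone version. -/
lemma Apow_sub {ε a b : ℝ} (hε : 0 ≤ ε) (ha : 0 ≤ a) (hab : a ≤ b) :
    0 ≤ Lg a ^ (-ε) - Lg b ^ (-ε) ∧
      Lg a ^ (-ε) - Lg b ^ (-ε) ≤ ε * ((b - a) / (Real.exp 1 + a)) ∧
      Lg a ^ (-ε) - Lg b ^ (-ε) ≤ 1 := by
  have hb : 0 ≤ b := le_trans ha hab
  have hx1 : 1 ≤ Lg a := one_le_Lg ha
  have hxy : Lg a ≤ Lg b := Lg_mono ha hab
  refine ⟨by nlinarith [rpow_neg_antitone hε (Lg_pos ha) hxy], ?_, ?_⟩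
  · have h1 := rpow_neg_sub_le hε hx1 hxy
    have h2 : Lg b - Lg a ≤ (b - a) / (Real.exp 1 + a) := by
      have hEa : 0 < Real.exp 1 + a := Et_pos ha
      have hEb : 0 < Real.exp 1 + b := Et_pos hb
      have h3 : Real.log ((Real.exp 1 + b) / (Real.exp 1 + a)) ≤
          (Real.exp 1 + b) / (Real.exp 1 + a) - 1 :=
        Real.log_le_sub_one_of_pos (by positivity)
      rw [Real.log_div hEb.ne' hEa.ne'] at h3
      have h4 : (Real.exp 1 + b) / (Real.exp 1 + a) - 1 = (b - a) / (Real.exp 1 + a) := by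
        field_simp
        ring
      rw [Lg, Lg]
      linarith
    calc Lg a ^ (-ε) - Lg b ^ (-ε) ≤ ε * (Lg b - Lg a) := h1
      _ ≤ ε * ((b - a) / (Real.exp 1 + a)) := mul_le_mul_of_nonneg_left h2 hε
  · have h1 : Lg a ^ (-ε) ≤ 1 := Lg_rpow_le_one ha (by linarith)
    have h2 : 0 ≤ Lg b ^ (-ε) := Lg_rpow_nonneg hb
    linarith

lemma rpow_add_le_add_rpow_real {x y s : ℝ} (hx : 0 ≤ x) (hy : 0 ≤ y)
    (hs0 : 0 ≤ s) (hs1 : s ≤ 1) : (x + y) ^ s ≤ x ^ s + y ^ s := by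
  have h := NNReal.rpow_add_le_add_rpow x.toNNReal y.toNNReal hs0 hs1
  have hc : ((x.toNNReal + y.toNNReal : NNReal) : ℝ) = x + y := by
    simp [Real.coe_toNNReal x hx, Real.coe_toNNReal y hy]
  have h2 : ((((x.toNNReal + y.toNNReal) ^ s : NNReal)) : ℝ) ≤
      (((x.toNNReal ^ s + y.toNNReal ^ s : NNReal)) : ℝ) := by exact_mod_cast h
  rw [NNReal.coe_rpow, hc, NNReal.coe_add, NNReal.coe_rpow, NNReal.coe_rpow,
    Real.coe_toNNReal x hx, Real.coe_toNNReal y hy] at h2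
  exact h2

lemma abs_rpow_sub_le {a b V s : ℝ} (ha : 0 ≤ a) (hb : 0 ≤ b) (hV : |a - b| ≤ V)
    (hs0 : 0 ≤ s) (hs1 : s ≤ 1) : |a ^ s - b ^ s| ≤ V ^ s := by
  have hV0 : 0 ≤ V := le_trans (abs_nonneg _) hV
  rw [abs_sub_le_iff] at hV
  rw [abs_sub_le_iff]
  constructor
  · have h1 : a ≤ b + V := by linarith [hV.1]
    calc a ^ s - b ^ s ≤ (b + V) ^ s - b ^ s := by
          have := Real.rpow_le_rpow ha h1 hs0
          linarith
      _ ≤ V ^ s := by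
          have := rpow_add_le_add_rpow_real hb hV0 hs0 hs1
          linarith
  · have h1 : b ≤ a + V := by linarith [hV.2]
    calc b ^ s - a ^ s ≤ (a + V) ^ s - a ^ s := by
          have := Real.rpow_le_rpow hb h1 hs0
          linarith
      _ ≤ V ^ s := by
          have := rpow_add_le_add_rpow_real ha hV0 hs0 hs1
          linarith

lemma mul_inv_Et_le_one {t : ℝ} (ht : 0 ≤ t) : t * (Real.exp 1 + t)⁻¹ ≤ 1 := by
  rw [← div_eq_mul_inv]
  exact div_le_one_of_le₀ (by linarith [Real.exp_pos 1]) (Et_pos ht).le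

lemma rpow_succ_mul_inv_le {t q : ℝ} (ht : 0 ≤ t) (hq : q + 1 ≠ 0) :
    t ^ (q + 1) * (Real.exp 1 + t)⁻¹ ≤ t ^ q := by
  rcases eq_or_lt_of_le ht with rfl | ht0
  · rw [Real.zero_rpow hq, zero_mul]
    exact Real.rpow_nonneg le_rfl q
  · rw [Real.rpow_add_one ht0.ne' q, mul_assoc]
    exact mul_le_of_le_one_right (Real.rpow_nonneg ht q) (mul_inv_Et_le_one ht)


/-! ### Bound on the difference of `psi` in the case `1 < p ≤ 2` -/

lemma psi_sub_bound_small {p ε a b V : ℝ} (hp1 : 1 < p) (hp2 : p ≤ 2)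
    (hε0 : 0 < ε) (hε1 : ε ≤ 1) (ha : 0 ≤ a) (hb : 0 ≤ b) (hV : |a - b| ≤ V) :
    |psi p ε a - psi p ε b| ≤ 7 * V ^ (p - 1) + 4 * (ε * b ^ (p - 1)) := by
  have hs0 : 0 < p - 1 := by linarith
  have hs1 : p - 1 ≤ 1 := by linarith
  have hV0 : 0 ≤ V := le_trans (abs_nonneg _) hV
  have haV : a ≤ b + V := by
    have := abs_sub_le_iff.mp hV
    linarith [this.1]
  have hVs0 : 0 ≤ V ^ (p - 1) := Real.rpow_nonneg hV0 _
  have has0 : 0 ≤ a ^ (p - 1) := Real.rpow_nonneg ha _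
  have hbs0 : 0 ≤ b ^ (p - 1) := Real.rpow_nonneg hb _
  have hAa1 : Lg a ^ (-ε) ≤ 1 := Lg_rpow_le_one ha (by linarith)
  have hAa0 : 0 ≤ Lg a ^ (-ε) := Lg_rpow_nonneg ha
  have hAb1 : Lg b ^ (-ε) ≤ 1 := Lg_rpow_le_one hb (by linarith)
  have hAb0 : 0 ≤ Lg b ^ (-ε) := Lg_rpow_nonneg hb
  -- the three pieces
  have expand : psi p ε a - psi p ε b =
      p * ((a ^ (p-1) - b ^ (p-1)) * Lg a ^ (-ε)) +
        p * (b ^ (p-1) * (Lg a ^ (-ε) - Lg b ^ (-ε))) -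
        ε * ((a ^ (p-1) * a * (Lg a ^ (-ε - 1) * (Real.exp 1 + a)⁻¹)) -
          (b ^ (p-1) * b * (Lg b ^ (-ε - 1) * (Real.exp 1 + b)⁻¹))) := by
    simp only [psi]; ring
  -- piece 1
  have hd1 : |a ^ (p-1) - b ^ (p-1)| ≤ V ^ (p-1) :=
    abs_rpow_sub_le ha hb hV hs0.le hs1
  have h1 : |p * ((a ^ (p-1) - b ^ (p-1)) * Lg a ^ (-ε))| ≤ 2 * V ^ (p-1) := by
    rw [abs_mul, abs_mul, abs_of_pos (by linarith : (0:ℝ) < p),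
      abs_of_nonneg hAa0]
    have k : |a ^ (p-1) - b ^ (p-1)| * Lg a ^ (-ε) ≤ V ^ (p-1) :=
      le_trans (mul_le_of_le_one_right (abs_nonneg _) hAa1) hd1
    have k0 : 0 ≤ |a ^ (p-1) - b ^ (p-1)| * Lg a ^ (-ε) :=
      mul_nonneg (abs_nonneg _) hAa0
    nlinarith [k, k0]
  -- piece 2
  have hAdiff : |Lg a ^ (-ε) - Lg b ^ (-ε)| ≤ 1 := by
    rcases le_total a b with hab | hab
    · have := Apow_sub hε0.le ha hab
      rw [abs_of_nonneg this.1]; exact this.2.2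
    · have := Apow_sub hε0.le hb hab
      rw [abs_sub_comm, abs_of_nonneg this.1]; exact this.2.2
  have h2 : |p * (b ^ (p-1) * (Lg a ^ (-ε) - Lg b ^ (-ε)))| ≤
      2 * (2 * V ^ (p-1) + ε * b ^ (p-1)) := by
    rw [abs_mul, abs_mul, abs_of_pos (by linarith : (0:ℝ) < p), abs_of_nonneg hbs0]
    have hεb0 : 0 ≤ ε * b ^ (p-1) := mul_nonneg hε0.le hbs0
    have key : b ^ (p-1) * |Lg a ^ (-ε) - Lg b ^ (-ε)| ≤ 2 * V ^ (p-1) + ε * b ^ (p-1) := by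
      rcases le_or_gt b (2 * V) with hbV | hbV
      · have hb2 : b ^ (p-1) ≤ (2*V) ^ (p-1) := Real.rpow_le_rpow hb hbV hs0.le
        have hb3 : (2*V) ^ (p-1) = 2 ^ (p-1) * V ^ (p-1) :=
          Real.mul_rpow (by norm_num) hV0
        have hb4 : (2:ℝ) ^ (p-1) ≤ 2 := by
          have := Real.rpow_le_rpow_of_exponent_le one_le_two hs1
          rwa [Real.rpow_one] at this
        have hb5 : b ^ (p-1) ≤ 2 * V ^ (p-1) := by
          rw [hb3] at hb2
          have := mul_le_mul_of_nonneg_right hb4 hVs0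
          linarith
        have := mul_le_of_le_one_right hbs0 hAdiff
        linarith
      · -- V < b/2
        have hdiff_eps : |Lg a ^ (-ε) - Lg b ^ (-ε)| ≤ ε := by
          rcases le_total a b with hab | hab
          · have hA := Apow_sub hε0.le ha hab
            rw [abs_of_nonneg hA.1]
            refine hA.2.1.trans ?_
            have hba : b - a ≤ V := by
              have := abs_sub_le_iff.mp hV; linarith [this.2]
            have hEa : 0 < Real.exp 1 + a := Et_pos ha
            have hfrac : (b - a) / (Real.exp 1 + a) ≤ 1 := by
              rw [div_le_one hEa]
              have h1e := Real.exp_pos 1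
              linarith
            exact mul_le_of_le_one_right hε0.le hfrac
          · have hA := Apow_sub hε0.le hb hab
            rw [abs_sub_comm, abs_of_nonneg hA.1]
            refine hA.2.1.trans ?_
            have hba : a - b ≤ V := by
              have := abs_sub_le_iff.mp hV; linarith [this.1]
            have hEb : 0 < Real.exp 1 + b := Et_pos hb
            have hfrac : (a - b) / (Real.exp 1 + b) ≤ 1 := by
              rw [div_le_one hEb]
              have h1e := Real.exp_pos 1
              linarith
            exact mul_le_of_le_one_right hε0.le hfrac
        have := mul_le_mul_of_nonneg_left hdiff_eps hbs0
        rw [mul_comm (b ^ (p-1)) ε] at this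
        linarith
    have key0 : 0 ≤ b ^ (p-1) * |Lg a ^ (-ε) - Lg b ^ (-ε)| :=
      mul_nonneg hbs0 (abs_nonneg _)
    nlinarith [key, key0]
  -- piece 3
  have hGbound : ∀ t : ℝ, 0 ≤ t →
      0 ≤ t ^ (p-1) * t * (Lg t ^ (-ε - 1) * (Real.exp 1 + t)⁻¹) ∧
      t ^ (p-1) * t * (Lg t ^ (-ε - 1) * (Real.exp 1 + t)⁻¹) ≤ t ^ (p-1) := by
    intro t ht
    have hts0 : 0 ≤ t ^ (p-1) := Real.rpow_nonneg ht _
    have hB1 : Lg t ^ (-ε - 1) ≤ 1 := Lg_rpow_le_one ht (by linarith)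
    have hB0 : 0 ≤ Lg t ^ (-ε - 1) := Lg_rpow_nonneg ht
    have hC0 : 0 ≤ (Real.exp 1 + t)⁻¹ := inv_nonneg.mpr (Et_pos ht).le
    have htC : t * (Real.exp 1 + t)⁻¹ ≤ 1 := mul_inv_Et_le_one ht
    have hinner : t * (Lg t ^ (-ε - 1) * (Real.exp 1 + t)⁻¹) ≤ 1 := by
      have heq : t * (Lg t ^ (-ε - 1) * (Real.exp 1 + t)⁻¹) =
          (t * (Real.exp 1 + t)⁻¹) * Lg t ^ (-ε - 1) := by ring
      rw [heq]
      exact mul_le_one₀ htC hB0 hB1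
    constructor
    · exact mul_nonneg (mul_nonneg hts0 ht) (mul_nonneg hB0 hC0)
    · have heq : t ^ (p-1) * t * (Lg t ^ (-ε - 1) * (Real.exp 1 + t)⁻¹) =
          t ^ (p-1) * (t * (Lg t ^ (-ε - 1) * (Real.exp 1 + t)⁻¹)) := by ring
      rw [heq]
      exact mul_le_of_le_one_right hts0 hinner
  have hGa := hGbound a ha
  have hGb := hGbound b hb
  have haVs : a ^ (p-1) ≤ b ^ (p-1) + V ^ (p-1) := by
    calc a ^ (p-1) ≤ (b + V) ^ (p-1) := Real.rpow_le_rpow ha haV hs0.le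
      _ ≤ b ^ (p-1) + V ^ (p-1) := rpow_add_le_add_rpow_real hb hV0 hs0.le hs1
  have h3 : |ε * ((a ^ (p-1) * a * (Lg a ^ (-ε - 1) * (Real.exp 1 + a)⁻¹)) -
      (b ^ (p-1) * b * (Lg b ^ (-ε - 1) * (Real.exp 1 + b)⁻¹)))| ≤
      ε * (2 * b ^ (p-1) + V ^ (p-1)) := by
    rw [abs_mul, abs_of_pos hε0]
    have habs : |(a ^ (p-1) * a * (Lg a ^ (-ε - 1) * (Real.exp 1 + a)⁻¹)) -
        (b ^ (p-1) * b * (Lg b ^ (-ε - 1) * (Real.exp 1 + b)⁻¹))| ≤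
        2 * b ^ (p-1) + V ^ (p-1) := by
      rw [abs_sub_le_iff]
      constructor <;> linarith [hGa.1, hGa.2, hGb.1, hGb.2, haVs]
    exact mul_le_mul_of_nonneg_left habs hε0.le
  -- add up
  rw [expand]
  have htri : |p * ((a ^ (p-1) - b ^ (p-1)) * Lg a ^ (-ε)) +
        p * (b ^ (p-1) * (Lg a ^ (-ε) - Lg b ^ (-ε))) -
        ε * ((a ^ (p-1) * a * (Lg a ^ (-ε - 1) * (Real.exp 1 + a)⁻¹)) -
          (b ^ (p-1) * b * (Lg b ^ (-ε - 1) * (Real.exp 1 + b)⁻¹)))| ≤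
      |p * ((a ^ (p-1) - b ^ (p-1)) * Lg a ^ (-ε))| +
        |p * (b ^ (p-1) * (Lg a ^ (-ε) - Lg b ^ (-ε)))| +
        |ε * ((a ^ (p-1) * a * (Lg a ^ (-ε - 1) * (Real.exp 1 + a)⁻¹)) -
          (b ^ (p-1) * b * (Lg b ^ (-ε - 1) * (Real.exp 1 + b)⁻¹)))| :=
    (abs_sub _ _).trans (by gcongr; exact abs_add_le _ _)
  have hεV : ε * V ^ (p-1) ≤ V ^ (p-1) := mul_le_of_le_one_left hVs0 hε1
  have hεb : 0 ≤ ε * b ^ (p-1) := mul_nonneg hε0.le hbs0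
  have hexp3 : ε * (2 * b ^ (p-1) + V ^ (p-1)) = 2 * (ε * b ^ (p-1)) + ε * V ^ (p-1) := by ring
  rw [hexp3] at h3
  linarith [h1, h2, h3, htri]

/-! ### Bound on the difference of `psi` in the case `2 ≤ p ≤ 5` -/

set_option maxHeartbeats 1000000 in
lemma hasDerivAt_psi {p ε t : ℝ} (hp : 2 ≤ p) (ht : 0 ≤ t) :
    HasDerivAt (psi p ε) (psi' p ε t) t := by
  have h1 : HasDerivAt (fun x : ℝ => x ^ (p-1)) ((p-1) * t ^ (p-1-1)) t :=
    Real.hasDerivAt_rpow_const (Or.inr (by linarith))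
  have hA := hasDerivAt_Lg_rpow (-ε) ht
  have hg1 := h1.mul hA
  have hB := hasDerivAt_Lg_rpow (-ε-1) ht
  have hEt : HasDerivAt (fun x : ℝ => Real.exp 1 + x) 1 t := (hasDerivAt_id t).const_add _
  have hC : HasDerivAt (fun x : ℝ => (Real.exp 1 + x)⁻¹) (-1 / (Real.exp 1 + t) ^ 2) t :=
    hEt.inv (Et_pos ht).ne'
  have hBC := hB.mul hC
  have hg2 := (h1.mul (hasDerivAt_id t)).mul hBC
  have h := (hg1.const_mul p).sub (hg2.const_mul ε)
  simp only [id_eq] at h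
  exact h

set_option maxHeartbeats 1000000 in
lemma psi'_abs_le {p ε t M : ℝ} (hp2 : 2 ≤ p) (hp5 : p ≤ 5) (hε0 : 0 < ε) (hε1 : ε ≤ 1)
    (ht : 0 ≤ t) (htM : t ≤ M) :
    |psi' p ε t| ≤ 33 * M ^ (p - 2) := by
  have hM0 : 0 ≤ M := le_trans ht htM
  -- coefficient bounds
  have c1 : p * (p-1) ≤ 20 := by nlinarith
  have c10 : 0 ≤ p * (p-1) := by nlinarith
  have c2 : p * ε ≤ 5 := by nlinarith
  have c20 : 0 ≤ p * ε := by nlinarith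
  have c3 : ε * (p-1) ≤ 4 := by nlinarith
  have c30 : 0 ≤ ε * (p-1) := by nlinarith
  have c5 : ε * (ε+1) ≤ 2 := by nlinarith
  have c50 : 0 ≤ ε * (ε+1) := by nlinarith
  have key : psi' p ε t =
      p * (p-1) * (t ^ (p-2) * Lg t ^ (-ε))
      - p * ε * (t ^ (p-1) * (Lg t ^ (-ε-1) * (Real.exp 1 + t)⁻¹))
      - ε * (p-1) * ((t ^ (p-2) * t) * (Lg t ^ (-ε-1) * (Real.exp 1 + t)⁻¹))
      - ε * (t ^ (p-1) * (Lg t ^ (-ε-1) * (Real.exp 1 + t)⁻¹))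
      + ε * (ε+1) * ((t ^ (p-1) * t) * (Lg t ^ (-ε-2) * ((Real.exp 1 + t)⁻¹ * (Real.exp 1 + t)⁻¹)))
      + ε * ((t ^ (p-1) * t) * (Lg t ^ (-ε-1) * ((Real.exp 1 + t)⁻¹ * (Real.exp 1 + t)⁻¹))) := by
    simp only [psi']
    rw [show p - 1 - 1 = p - 2 from by ring, show -ε - 1 - 1 = -ε - 2 from by ring,
      show (-1 : ℝ) / (Real.exp 1 + t) ^ 2 =
        -((Real.exp 1 + t)⁻¹ * (Real.exp 1 + t)⁻¹) from by rw [sq, neg_div, one_div, mul_inv]]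
    ring
  have ha0 : 0 ≤ t ^ (p-2) := Real.rpow_nonneg ht _
  have hb0 : 0 ≤ t ^ (p-1) := Real.rpow_nonneg ht _
  have hAv1 : Lg t ^ (-ε) ≤ 1 := Lg_rpow_le_one ht (by linarith)
  have hAv0 : 0 ≤ Lg t ^ (-ε) := Lg_rpow_nonneg ht
  have hBv1 : Lg t ^ (-ε-1) ≤ 1 := Lg_rpow_le_one ht (by linarith)
  have hBv0 : 0 ≤ Lg t ^ (-ε-1) := Lg_rpow_nonneg ht
  have hDv1 : Lg t ^ (-ε-2) ≤ 1 := Lg_rpow_le_one ht (by linarith)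
  have hDv0 : 0 ≤ Lg t ^ (-ε-2) := Lg_rpow_nonneg ht
  have hC0 : 0 ≤ (Real.exp 1 + t)⁻¹ := inv_nonneg.mpr (Et_pos ht).le
  have htC : t * (Real.exp 1 + t)⁻¹ ≤ 1 := mul_inv_Et_le_one ht
  have hbC : t ^ (p-1) * (Real.exp 1 + t)⁻¹ ≤ t ^ (p-2) := by
    have h := rpow_succ_mul_inv_le (q := p - 2) ht
      (ne_of_gt (by linarith : (0:ℝ) < p - 2 + 1))
    rwa [show p - 2 + 1 = p - 1 from by ring] at h
  have hM' : t ^ (p-2) ≤ M ^ (p-2) := Real.rpow_le_rpow ht htM (by linarith)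
  have hM'0 : 0 ≤ M ^ (p-2) := Real.rpow_nonneg hM0 _
  -- bounds for the six basic monomials
  have k1 : t ^ (p-2) * Lg t ^ (-ε) ≤ M ^ (p-2) :=
    le_trans (mul_le_of_le_one_right ha0 hAv1) hM'
  have k10 : 0 ≤ t ^ (p-2) * Lg t ^ (-ε) := mul_nonneg ha0 hAv0
  have k2 : t ^ (p-1) * (Lg t ^ (-ε-1) * (Real.exp 1 + t)⁻¹) ≤ M ^ (p-2) := by
    have heq : t ^ (p-1) * (Lg t ^ (-ε-1) * (Real.exp 1 + t)⁻¹) =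
        (t ^ (p-1) * (Real.exp 1 + t)⁻¹) * Lg t ^ (-ε-1) := by ring
    rw [heq]
    exact le_trans (le_trans (mul_le_of_le_one_right (mul_nonneg hb0 hC0) hBv1) hbC) hM'
  have k20 : 0 ≤ t ^ (p-1) * (Lg t ^ (-ε-1) * (Real.exp 1 + t)⁻¹) :=
    mul_nonneg hb0 (mul_nonneg hBv0 hC0)
  have k3 : (t ^ (p-2) * t) * (Lg t ^ (-ε-1) * (Real.exp 1 + t)⁻¹) ≤ M ^ (p-2) := by
    have heq : (t ^ (p-2) * t) * (Lg t ^ (-ε-1) * (Real.exp 1 + t)⁻¹) =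
        t ^ (p-2) * ((t * (Real.exp 1 + t)⁻¹) * Lg t ^ (-ε-1)) := by ring
    rw [heq]
    refine le_trans (mul_le_of_le_one_right ha0 ?_) hM'
    exact mul_le_one₀ htC hBv0 hBv1
  have k30 : 0 ≤ (t ^ (p-2) * t) * (Lg t ^ (-ε-1) * (Real.exp 1 + t)⁻¹) :=
    mul_nonneg (mul_nonneg ha0 ht) (mul_nonneg hBv0 hC0)
  have k5 : (t ^ (p-1) * t) * (Lg t ^ (-ε-2) * ((Real.exp 1 + t)⁻¹ * (Real.exp 1 + t)⁻¹)) ≤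
      M ^ (p-2) := by
    have heq : (t ^ (p-1) * t) * (Lg t ^ (-ε-2) * ((Real.exp 1 + t)⁻¹ * (Real.exp 1 + t)⁻¹)) =
        (t ^ (p-1) * (Real.exp 1 + t)⁻¹) * ((t * (Real.exp 1 + t)⁻¹) * Lg t ^ (-ε-2)) := by ring
    rw [heq]
    refine le_trans (le_trans (mul_le_of_le_one_right (mul_nonneg hb0 hC0) ?_) hbC) hM'
    exact mul_le_one₀ htC hDv0 hDv1
  have k50 : 0 ≤ (t ^ (p-1) * t) * (Lg t ^ (-ε-2) * ((Real.exp 1 + t)⁻¹ * (Real.exp 1 + t)⁻¹)) :=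
    mul_nonneg (mul_nonneg hb0 ht) (mul_nonneg hDv0 (mul_nonneg hC0 hC0))
  have k6 : (t ^ (p-1) * t) * (Lg t ^ (-ε-1) * ((Real.exp 1 + t)⁻¹ * (Real.exp 1 + t)⁻¹)) ≤
      M ^ (p-2) := by
    have heq : (t ^ (p-1) * t) * (Lg t ^ (-ε-1) * ((Real.exp 1 + t)⁻¹ * (Real.exp 1 + t)⁻¹)) =
        (t ^ (p-1) * (Real.exp 1 + t)⁻¹) * ((t * (Real.exp 1 + t)⁻¹) * Lg t ^ (-ε-1)) := by ring
    rw [heq]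
    refine le_trans (le_trans (mul_le_of_le_one_right (mul_nonneg hb0 hC0) ?_) hbC) hM'
    exact mul_le_one₀ htC hBv0 hBv1
  have k60 : 0 ≤ (t ^ (p-1) * t) * (Lg t ^ (-ε-1) * ((Real.exp 1 + t)⁻¹ * (Real.exp 1 + t)⁻¹)) :=
    mul_nonneg (mul_nonneg hb0 ht) (mul_nonneg hBv0 (mul_nonneg hC0 hC0))
  -- term bounds
  have hT1 := mul_le_mul c1 k1 k10 (by norm_num : (0:ℝ) ≤ 20)
  have hT10 := mul_nonneg c10 k10
  have hT2 := mul_le_mul c2 k2 k20 (by norm_num : (0:ℝ) ≤ 5)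
  have hT20 := mul_nonneg c20 k20
  have hT3 := mul_le_mul c3 k3 k30 (by norm_num : (0:ℝ) ≤ 4)
  have hT30 := mul_nonneg c30 k30
  have hT4 := mul_le_mul hε1 k2 k20 (by norm_num : (0:ℝ) ≤ 1)
  have hT40 := mul_nonneg hε0.le k20
  have hT5 := mul_le_mul c5 k5 k50 (by norm_num : (0:ℝ) ≤ 2)
  have hT50 := mul_nonneg c50 k50
  have hT6 := mul_le_mul hε1 k6 k60 (by norm_num : (0:ℝ) ≤ 1)
  have hT60 := mul_nonneg hε0.le k60
  rw [key, abs_le]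
  constructor <;> linarith [hT1, hT10, hT2, hT20, hT3, hT30, hT4, hT40, hT5, hT50, hT6,
    hT60, hM'0]

lemma psi_sub_bound_big {p ε a b M : ℝ} (hp2 : 2 ≤ p) (hp5 : p ≤ 5)
    (hε0 : 0 < ε) (hε1 : ε ≤ 1) (ha : 0 ≤ a) (haM : a ≤ M) (hb : 0 ≤ b) (hbM : b ≤ M) :
    |psi p ε a - psi p ε b| ≤ 33 * M ^ (p - 2) * |a - b| := by
  have h := (convex_Icc (0:ℝ) M).norm_image_sub_le_of_norm_hasDerivWithin_le
    (f := psi p ε) (f' := psi' p ε) (C := 33 * M ^ (p-2))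
    (fun x hx => (hasDerivAt_psi hp2 hx.1).hasDerivWithinAt)
    (fun x hx => by rw [Real.norm_eq_abs]; exact psi'_abs_le hp2 hp5 hε0 hε1 hx.1 hx.2)
    ⟨hb, hbM⟩ ⟨ha, haM⟩
  simpa [Real.norm_eq_abs] using h

lemma add_rpow_le_eight {x y q : ℝ} (hx : 0 ≤ x) (hy : 0 ≤ y) (hq0 : 0 ≤ q) (hq3 : q ≤ 3) :
    (x + y) ^ q ≤ 8 * (x ^ q + y ^ q) := by
  have hm0 : 0 ≤ max x y := le_trans hx (le_max_left x y)
  have h1 : x + y ≤ 2 * max x y := by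
    rcases le_total x y with h | h
    · rw [max_eq_right h]; linarith
    · rw [max_eq_left h]; linarith
  have h2 : (x + y) ^ q ≤ (2 * max x y) ^ q :=
    Real.rpow_le_rpow (by positivity) h1 hq0
  have h3 : (2 * max x y) ^ q = 2 ^ q * (max x y) ^ q :=
    Real.mul_rpow (by norm_num) hm0
  have h4 : (2:ℝ) ^ q ≤ 8 := by
    have h := Real.rpow_le_rpow_of_exponent_le one_le_two hq3
    rwa [show (2:ℝ) ^ (3:ℝ) = 8 from by
      rw [show (3:ℝ) = ((3:ℕ):ℝ) from by norm_num, Real.rpow_natCast]; norm_num] at h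
  have h5 : (max x y) ^ q ≤ x ^ q + y ^ q := by
    rcases max_cases x y with ⟨hm, _⟩ | ⟨hm, _⟩ <;> rw [hm]
    · linarith [Real.rpow_nonneg hy q]
    · linarith [Real.rpow_nonneg hx q]
  have h6 : 0 ≤ (max x y) ^ q := Real.rpow_nonneg hm0 q
  have h7 : 2 ^ q * (max x y) ^ q ≤ 8 * (x ^ q + y ^ q) :=
    mul_le_mul h4 h5 h6 (by norm_num)
  calc (x + y) ^ q ≤ 2 ^ q * (max x y) ^ q := by rw [← h3]; exact h2
    _ ≤ 8 * (x ^ q + y ^ q) := h7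

/-- There exist `ε₀ > 0` and `C > 0` such that for every `ε ∈ (0, ε₀]` and all `u, v ∈ ℝ`:
if `3 ≤ n ≤ 6` then `|f_ε′(u+v) - f_ε′(u)| ≤ C (|u|^{p-2} + |v|^{p-2}) |v|`, and if `n > 6`
then `|f_ε′(u+v) - f_ε′(u)| ≤ C (|v|^{p-1} + ε |u|^{p-1})`. -/
theorem deriv_fEps_difference_bound (n : ℕ) (hn : 3 ≤ n) :
    ∃ ε₀ > (0 : ℝ), ∃ C > (0 : ℝ), ∀ ε : ℝ, 0 < ε → ε ≤ ε₀ → ∀ u v : ℝ,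
      (n ≤ 6 →
        |deriv (fEps n ε) (u + v) - deriv (fEps n ε) u| ≤
          C * (|u| ^ (pCrit n - 2) + |v| ^ (pCrit n - 2)) * |v|) ∧
      (6 < n →
        |deriv (fEps n ε) (u + v) - deriv (fEps n ε) u| ≤
          C * (|v| ^ (pCrit n - 1) + ε * |u| ^ (pCrit n - 1))) := by
  refine ⟨1, one_pos, 1000, by norm_num, ?_⟩
  intro ε hε0 hε1 u v
  have hn3 : (3:ℝ) ≤ (n:ℝ) := by exact_mod_cast hn
  have hden : (0:ℝ) < (n:ℝ) - 2 := by linarith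
  have hp1 : 1 < pCrit n := by
    rw [pCrit, lt_div_iff₀ hden]; linarith
  have hp5 : pCrit n ≤ 5 := by
    rw [pCrit, div_le_iff₀ hden]; linarith
  have hder : ∀ w : ℝ, deriv (fEps n ε) w = psi (pCrit n) ε |w| :=
    deriv_fEps n hp1 hε0.le
  have habsv : |(|u + v| - |u|)| ≤ |v| := by
    rw [abs_sub_le_iff]
    constructor
    · have h := abs_sub_abs_le_abs_sub (u + v) u
      simpa using h
    · have h := abs_sub_abs_le_abs_sub u (u + v)
      simpa using h
  constructor
  · intro hn6
    have hp2 : 2 ≤ pCrit n := by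
      rw [pCrit, le_div_iff₀ hden]
      have h6 : (n:ℝ) ≤ 6 := by exact_mod_cast hn6
      linarith
    rw [hder, hder]
    have hM : |u + v| ≤ |u| + |v| := abs_add_le u v
    have hbM : |u| ≤ |u| + |v| := le_add_of_nonneg_right (abs_nonneg v)
    have h := psi_sub_bound_big hp2 hp5 hε0 hε1 (abs_nonneg (u + v)) hM (abs_nonneg u) hbM
    have h2 : |(psi (pCrit n) ε |u + v| - psi (pCrit n) ε |u|)| ≤
        33 * (|u| + |v|) ^ (pCrit n - 2) * |v| := by
      refine h.trans ?_
      have h30 : 0 ≤ 33 * (|u| + |v|) ^ (pCrit n - 2) := by positivity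
      exact mul_le_mul_of_nonneg_left habsv h30
    refine h2.trans ?_
    have hsplit : (|u| + |v|) ^ (pCrit n - 2) ≤
        8 * (|u| ^ (pCrit n - 2) + |v| ^ (pCrit n - 2)) :=
      add_rpow_le_eight (abs_nonneg u) (abs_nonneg v) (by linarith) (by linarith)
    have hS0 : 0 ≤ |u| ^ (pCrit n - 2) + |v| ^ (pCrit n - 2) := by
      have := Real.rpow_nonneg (abs_nonneg u) (pCrit n - 2)
      have := Real.rpow_nonneg (abs_nonneg v) (pCrit n - 2)
      linarith
    have key : 33 * (|u| + |v|) ^ (pCrit n - 2) ≤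
        1000 * (|u| ^ (pCrit n - 2) + |v| ^ (pCrit n - 2)) := by linarith
    exact mul_le_mul_of_nonneg_right key (abs_nonneg v)
  · intro hn6
    have hp2' : pCrit n ≤ 2 := by
      rw [pCrit, div_le_iff₀ hden]
      have h7 : (7:ℝ) ≤ (n:ℝ) := by exact_mod_cast hn6
      linarith
    rw [hder, hder]
    have h := psi_sub_bound_small hp1 hp2' hε0 hε1 (abs_nonneg (u + v)) (abs_nonneg u) habsv
    refine h.trans ?_
    have h1 : 0 ≤ |v| ^ (pCrit n - 1) := Real.rpow_nonneg (abs_nonneg v) _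
    have h2 : 0 ≤ ε * |u| ^ (pCrit n - 1) :=
      mul_nonneg hε0.le (Real.rpow_nonneg (abs_nonneg u) _)
    linarith
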